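/- Let C : ℕ → ℝ² satisfy: (i) ⋃ₙ closedBall(C n, 1) = ℝ²; and (ii) for every n ≥ 1, 0 < dist(C n, C (n−1)) ≤ 1 (each disk contains the center of the next disk). Then liminf_{λ→∞} N_C(λ)·π/(4λ²) ≥ π/(π/3 + √3/2), the liminf being computed in the extended nonnegative reals. (No restriction on the turning angles is assumed here.) -/

import Mathlib

open Metric MeasureTheory Filter Real
open scoped ENNReal

noncomputable section

/-- The Euclidean plane. -/
abbrev Pt := EuclideanSpace ℝ (Fin 2)

/-- The open square `(−λ,λ) × (−λ,λ)`. -/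
def openSquare (l : ℝ) : Set Pt := {p | |p 0| < l ∧ |p 1| < l}

/-- `N_C(λ)`: the extended number of indices `i` such that the closed unit ball centered at
`C i` meets the open square `(−λ,λ) × (−λ,λ)`. -/
def Ncount {ι : Type*} (C : ι → Pt) (l : ℝ) : ℝ≥0∞ :=
  ({i | (closedBall (C i) 1 ∩ openSquare l).Nonempty}.encard : ℕ∞)

/-- The lower density `liminf_{λ→∞} N_C(λ)·π/(4λ²)` of the family of unit disks centered at
the points `C i`, computed in `ℝ≥0∞`. -/
def lowerDensity {ι : Type*} (C : ι → Pt) : ℝ≥0∞ :=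
  Filter.liminf (fun l : ℝ => Ncount C l * ENNReal.ofReal π / ENNReal.ofReal (4 * l ^ 2))
    Filter.atTop

open scoped Topology

/-!
Write `B n` for the closed unit disk about `C n`. A point of the square lies in `B 0` or in the
crescent `B n \ B (n - 1)` for the least `n` with the point in `B n`, and then `B n` meets the
square; so `4λ² ≤ π + N_C(λ) · A`, where `A` bounds the area of a crescent `B x \ B y` with
`dist x y ≤ 1`. Pushing `y` away from `x` along their line until the distance is `1` only enlarges
the crescent (disks are convex), and at distance `1` the two disks meet in a lens made of two
circular segments of angle `2π/3`, of total area `2π/3 - √3/2`; hence `A = π/3 + √3/2`. Dividing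
by `4λ²` and letting `λ → ∞` gives the bound.
-/

theorem integral_sqrt_one_sub_sq_sin {a b : ℝ} (ha : -(π / 2) ≤ a) (hab : a ≤ b) (hb : b ≤ π / 2) :
    ∫ x in sin a..sin b, √(1 - x ^ 2) = (cos b * sin b - cos a * sin a + b - a) / 2 := by
  rw [← integral_cos_sq, ← intervalIntegral.integral_comp_mul_deriv (fun x _ => hasDerivAt_sin x)
    continuousOn_cos (by fun_prop)]
  refine intervalIntegral.integral_congr fun x hx => ?_
  rw [Set.uIcc_of_le hab] at hx
  rw [Function.comp_apply, ← cos_eq_sqrt_one_sub_sin_sq (ha.trans hx.1) (hx.2.trans hb), sq]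

theorem integral_sqrt_one_sub_sq_half_one :
    ∫ x in (1 / 2 : ℝ)..1, √(1 - x ^ 2) = π / 6 - √3 / 8 := by
  have h := integral_sqrt_one_sub_sq_sin (a := π / 6) (b := π / 2) (by linarith [pi_pos])
    (by linarith [pi_pos]) le_rfl
  rw [sin_pi_div_six, sin_pi_div_two, cos_pi_div_two, cos_pi_div_six] at h
  rw [h]
  ring

/-- In coordinates, `closedBall 0 1 ∩ closedBall (1, 0) 1` is
`{(x, y) | 0 ≤ x ≤ 1, |y| ≤ lensHalfWidth x}`. -/
def lensHalfWidth (x : ℝ) : ℝ := min (√(1 - x ^ 2)) (√(1 - (1 - x) ^ 2))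

theorem continuous_lensHalfWidth : Continuous lensHalfWidth := by
  unfold lensHalfWidth; fun_prop

theorem lensHalfWidth_one_sub (x : ℝ) : lensHalfWidth (1 - x) = lensHalfWidth x := by
  simp only [lensHalfWidth, sub_sub_cancel, min_comm]

theorem lensHalfWidth_of_half_le {x : ℝ} (hx : 1 / 2 ≤ x) : lensHalfWidth x = √(1 - x ^ 2) :=
  min_eq_left (Real.sqrt_le_sqrt (by nlinarith))

theorem integral_lensHalfWidth : ∫ x in (0 : ℝ)..1, lensHalfWidth x = π / 3 - √3 / 4 := by
  have hintegrable (a b : ℝ) := continuous_lensHalfWidth.intervalIntegrable (μ := volume) a b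
  have hleft : ∫ x in (0 : ℝ)..1 / 2, lensHalfWidth x = ∫ x in (1 / 2 : ℝ)..1, lensHalfWidth x :=
    calc ∫ x in (0 : ℝ)..1 / 2, lensHalfWidth x
        = ∫ x in (0 : ℝ)..1 / 2, lensHalfWidth (1 - x) := by simp only [lensHalfWidth_one_sub]
      _ = _ := by rw [intervalIntegral.integral_comp_sub_left]; norm_num
  have hright : ∫ x in (1 / 2 : ℝ)..1, lensHalfWidth x = ∫ x in (1 / 2 : ℝ)..1, √(1 - x ^ 2) :=
    intervalIntegral.integral_congr fun x hx => by
      rw [Set.uIcc_of_le (by norm_num)] at hx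
      exact lensHalfWidth_of_half_le hx.1
  rw [← intervalIntegral.integral_add_adjacent_intervals (hintegrable 0 (1 / 2))
    (hintegrable (1 / 2) 1), hleft, hright, integral_sqrt_one_sub_sq_half_one]
  ring

theorem measurePreserving_coords : MeasurePreserving (fun p : Pt => (p 0, p 1)) :=
  (volume_preserving_finTwoArrow ℝ).comp (PiLp.volume_preserving_ofLp (Fin 2))

theorem mem_closedBall_one_iff_coords (p q : Pt) :
    p ∈ closedBall q 1 ↔ (p 0 - q 0) ^ 2 + (p 1 - q 1) ^ 2 ≤ 1 := by
  rw [mem_closedBall, EuclideanSpace.dist_eq, Real.sqrt_le_one, Fin.sum_univ_two, Real.dist_eq,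
    Real.dist_eq, sq_abs, sq_abs]

theorem ofReal_le_volume_closedBall_inter_closedBall_single :
    ENNReal.ofReal (2 * π / 3 - √3 / 2)
      ≤ volume (closedBall (0 : Pt) 1 ∩ closedBall (EuclideanSpace.single 0 1) 1) := by
  set R := regionBetween (-lensHalfWidth) lensHalfWidth (Set.Ioo 0 1)
  have hintegrable : IntegrableOn lensHalfWidth (Set.Ioo 0 1) :=
    continuous_lensHalfWidth.integrableOn_Icc.mono_set Set.Ioo_subset_Icc_self
  have hR : volume R = ENNReal.ofReal (2 * π / 3 - √3 / 2) := by
    rw [Measure.volume_eq_prod, volume_regionBetween_eq_integral hintegrable.neg hintegrable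
      measurableSet_Ioo fun x _ => neg_le_self (le_min (Real.sqrt_nonneg _) (Real.sqrt_nonneg _)),
      integral_Ioc_eq_integral_Ioo.symm, ← intervalIntegral.integral_of_le zero_le_one]
    simp only [Pi.sub_apply, Pi.neg_apply, sub_neg_eq_add, ← two_mul]
    rw [intervalIntegral.integral_const_mul, integral_lensHalfWidth]
    ring_nf
  have hsub : (fun p : Pt => (p 0, p 1)) ⁻¹' R
      ⊆ closedBall 0 1 ∩ closedBall (EuclideanSpace.single 0 1) 1 := by
    rintro p ⟨-, hy⟩
    have hsq {c : ℝ} (h : |p 1| < √c) : p 1 ^ 2 ≤ c := by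
      rw [← sq_abs]; exact ((Real.lt_sqrt (abs_nonneg _)).mp h).le
    obtain ⟨h0, h1⟩ := lt_min_iff.mp (abs_lt.mpr hy)
    rw [Set.mem_inter_iff, mem_closedBall_one_iff_coords, mem_closedBall_one_iff_coords]
    simp only [PiLp.zero_apply, PiLp.single_apply]
    constructor <;> norm_num <;> linarith [hsq h0, hsq h1]
  calc ENNReal.ofReal (2 * π / 3 - √3 / 2) = volume R := hR.symm
    _ = volume ((fun p : Pt => (p 0, p 1)) ⁻¹' R) :=
      (measurePreserving_coords.measure_preimage (measurableSet_regionBetween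
        continuous_lensHalfWidth.neg.measurable continuous_lensHalfWidth.measurable
        measurableSet_Ioo).nullMeasurableSet).symm
    _ ≤ _ := measure_mono hsub

theorem volume_closedBall_diff_closedBall_single_le :
    volume (closedBall (0 : Pt) 1 \ closedBall (EuclideanSpace.single 0 1) 1)
      ≤ ENNReal.ofReal (π / 3 + √3 / 2) := by
  have hlens_fin : volume (closedBall (0 : Pt) 1 ∩ closedBall (EuclideanSpace.single 0 1) 1) ≠ ⊤ :=
    measure_ne_top_of_subset Set.inter_subset_left measure_closedBall_lt_top.ne
  have hsqrt3 : √3 < 2 := by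
    rw [Real.sqrt_lt' two_pos]; norm_num
  have hlens_nonneg : 0 ≤ 2 * π / 3 - √3 / 2 := by linarith [pi_gt_three]
  rw [← Set.sdiff_self_inter, measure_sdiff Set.inter_subset_left
    (measurableSet_closedBall.inter measurableSet_closedBall).nullMeasurableSet hlens_fin,
    EuclideanSpace.volume_closedBall_fin_two, ENNReal.ofReal_one, one_pow, one_mul]
  calc ENNReal.ofReal π - volume (closedBall (0 : Pt) 1 ∩ closedBall (EuclideanSpace.single 0 1) 1)
      ≤ ENNReal.ofReal π - ENNReal.ofReal (2 * π / 3 - √3 / 2) := by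
        gcongr; exact ofReal_le_volume_closedBall_inter_closedBall_single
    _ = ENNReal.ofReal (π / 3 + √3 / 2) := by
        rw [← ENNReal.ofReal_sub _ hlens_nonneg]; ring_nf

theorem closedBall_diff_closedBall_subset_of_mem_segment {E : Type*} [SeminormedAddCommGroup E]
    [NormedSpace ℝ E] {x y z : E} (r : ℝ) (h : y ∈ segment ℝ x z) :
    closedBall x r \ closedBall y r ⊆ closedBall x r \ closedBall z r := by
  rintro p ⟨hx, hy⟩
  refine ⟨hx, fun hz => hy ?_⟩
  exact mem_closedBall_comm.mp <| (convex_closedBall p r).segment_subset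
    (mem_closedBall_comm.mp hx) (mem_closedBall_comm.mp hz) h

theorem volume_closedBall_diff_closedBall_congr {E : Type*} [NormedAddCommGroup E]
    [InnerProductSpace ℝ E] [FiniteDimensional ℝ E] [MeasurableSpace E] [BorelSpace E]
    {x y x' y' : E} (h : dist x y = dist x' y') (r s : ℝ) :
    volume (closedBall x r \ closedBall y s) = volume (closedBall x' r \ closedBall y' s) := by
  have hnorm : ‖y - x‖ = ‖y' - x'‖ := by
    rw [← dist_eq_norm, ← dist_eq_norm, dist_comm, h, dist_comm]
  set R : E ≃ₗᵢ[ℝ] E := Submodule.reflection (ℝ ∙ (y - x - (y' - x')))ᗮ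
  have hR : R (y - x) = y' - x' := Submodule.reflection_sub hnorm
  have hG : MeasurePreserving (fun p => R (p - x) + x') :=
    (measurePreserving_add_right volume x').comp
      (R.measurePreserving.comp (measurePreserving_sub_right volume x))
  have hdist (p q : E) : dist (R (p - x) + x') (R (q - x) + x') = dist p q := by
    rw [dist_add_right, R.dist_map, dist_sub_right]
  have hpre : (fun p => R (p - x) + x') ⁻¹' (closedBall x' r \ closedBall y' s)
      = closedBall x r \ closedBall y s := by
    ext p
    simp only [Set.mem_preimage, Set.mem_sdiff, mem_closedBall]
    rw [← hdist p x, ← hdist p y, sub_self, map_zero, zero_add, hR, sub_add_cancel]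
  rw [← hpre, hG.measure_preimage
    (measurableSet_closedBall.diff measurableSet_closedBall).nullMeasurableSet]

theorem volume_closedBall_diff_closedBall_le {x y : Pt} (h : dist x y ≤ 1) :
    volume (closedBall x 1 \ closedBall y 1) ≤ ENNReal.ofReal (π / 3 + √3 / 2) := by
  rcases eq_or_ne x y with rfl | hxy
  · simp
  set d := dist x y
  have hd : 0 < d := dist_pos.mpr hxy
  set z := x + d⁻¹ • (y - x)
  have hz : dist x z = dist (0 : Pt) (EuclideanSpace.single 0 1) := by
    rw [dist_self_add_right, norm_smul, norm_inv, Real.norm_of_nonneg hd.le, ← dist_eq_norm',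
      inv_mul_cancel₀ hd.ne', dist_zero_left, PiLp.norm_single, norm_one]
  have hy : y ∈ segment ℝ x z := by
    convert lineMap_mem_segment ℝ x z ⟨hd.le, h⟩ using 1
    rw [AffineMap.lineMap_apply_module', add_sub_cancel_left, smul_inv_smul₀ hd.ne', sub_add_cancel]
  calc volume (closedBall x 1 \ closedBall y 1) ≤ volume (closedBall x 1 \ closedBall z 1) :=
        measure_mono (closedBall_diff_closedBall_subset_of_mem_segment 1 hy)
    _ = volume (closedBall (0 : Pt) 1 \ closedBall (EuclideanSpace.single 0 1) 1) :=
        volume_closedBall_diff_closedBall_congr hz 1 1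
    _ ≤ _ := volume_closedBall_diff_closedBall_single_le

theorem subset_union_biUnion_sdiff_pred {α : Type*} {U : ℕ → Set α} {S : Set α}
    (hS : S ⊆ ⋃ n, U n) :
    S ⊆ U 0 ∪ ⋃ n ∈ {n | (U n ∩ S).Nonempty}, U n \ U (n - 1) := by
  classical
  intro p hp
  have hex : ∃ n, p ∈ U n := Set.mem_iUnion.mp (hS hp)
  rcases Nat.eq_zero_or_pos (Nat.find hex) with h0 | hpos
  · exact Or.inl (h0 ▸ Nat.find_spec hex)
  · refine Or.inr (Set.mem_biUnion ⟨p, Nat.find_spec hex, hp⟩ ⟨Nat.find_spec hex, ?_⟩)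
    exact Nat.find_min hex (Nat.sub_lt hpos one_pos)

theorem measure_le_add_encard_mul {α : Type*} [MeasurableSpace α] {μ : Measure α} {U : ℕ → Set α}
    {S : Set α} {A : ℝ≥0∞} (hS : S ⊆ ⋃ n, U n) (hA : ∀ n, 1 ≤ n → μ (U n \ U (n - 1)) ≤ A) :
    μ S ≤ μ (U 0) + {n | (U n ∩ S).Nonempty}.encard * A := by
  set I := {n | (U n ∩ S).Nonempty}
  calc μ S ≤ μ (U 0 ∪ ⋃ n ∈ I, U n \ U (n - 1)) := measure_mono (subset_union_biUnion_sdiff_pred hS)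
    _ ≤ μ (U 0) + ∑' n : I, μ (U n \ U (n - 1)) :=
        (measure_union_le _ _).trans (add_le_add_right (measure_biUnion_le μ I.to_countable _) _)
    _ ≤ μ (U 0) + ∑' _ : I, A := by
        gcongr with n
        rcases Nat.eq_zero_or_pos n with h0 | hpos
        · simp [h0]
        · exact hA n hpos
    _ = μ (U 0) + I.encard * A := by rw [ENNReal.tsum_set_const]

theorem volume_openSquare {l : ℝ} (hl : 0 ≤ l) :
    volume (openSquare l) = ENNReal.ofReal (4 * l ^ 2) := by
  have hset : openSquare l = (fun p : Pt => (p 0, p 1)) ⁻¹' (Set.Ioo (-l) l ×ˢ Set.Ioo (-l) l) := by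
    ext p
    simp [openSquare, abs_lt]
  rw [hset, measurePreserving_coords.measure_preimage
    (measurableSet_Ioo.prod measurableSet_Ioo).nullMeasurableSet, Measure.volume_eq_prod,
    Measure.prod_prod, Real.volume_Ioo, ← ENNReal.ofReal_mul (by linarith)]
  ring_nf

theorem ofReal_div_le_liminf_mul_div {α : Type*} {L : Filter α} [L.NeBot] {N : α → ℝ≥0∞}
    {v : α → ℝ} {a b c : ℝ} (hv : Tendsto v L atTop) (ha : 0 < a) (hb : 0 ≤ b)
    (h : ∀ᶠ l in L, ENNReal.ofReal (v l) ≤ ENNReal.ofReal b + N l * ENNReal.ofReal a) :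
    ENNReal.ofReal (c / a)
      ≤ liminf (fun l => N l * ENNReal.ofReal c / ENNReal.ofReal (v l)) L := by
  set g := fun l => (v l - b) / a * c / v l
  have hg : Tendsto g L (𝓝 (c / a)) := by
    have h1 : Tendsto (fun l => c / a * (1 - b / v l)) L (𝓝 (c / a * (1 - 0))) :=
      (tendsto_const_nhds.sub (tendsto_const_nhds.div_atTop hv)).const_mul _
    rw [sub_zero, mul_one] at h1
    refine h1.congr' ?_
    filter_upwards [hv.eventually_gt_atTop 0] with l hl
    simp only [g]
    field_simp
  have hle : ∀ᶠ l in L, ENNReal.ofReal (g l) ≤ N l * ENNReal.ofReal c / ENNReal.ofReal (v l) := by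
    filter_upwards [h, hv.eventually_gt_atTop b] with l hl hbl
    have hN : ENNReal.ofReal (v l - b) / ENNReal.ofReal a ≤ N l := by
      rw [ENNReal.div_le_iff_le_mul (.inl (ENNReal.ofReal_pos.mpr ha).ne')
        (.inl ENNReal.ofReal_ne_top), ENNReal.ofReal_sub _ hb]
      exact tsub_le_iff_left.mpr hl
    calc ENNReal.ofReal (g l)
        = ENNReal.ofReal (v l - b) / ENNReal.ofReal a * ENNReal.ofReal c
            / ENNReal.ofReal (v l) := by
          rw [ENNReal.ofReal_div_of_pos (by linarith),
            ENNReal.ofReal_mul (div_nonneg (by linarith) ha.le), ENNReal.ofReal_div_of_pos ha]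
      _ ≤ N l * ENNReal.ofReal c / ENNReal.ofReal (v l) := by gcongr
  calc ENNReal.ofReal (c / a) = liminf (fun l => ENNReal.ofReal (g l)) L :=
        ((ENNReal.tendsto_ofReal hg).liminf_eq).symm
    _ ≤ _ := liminf_le_liminf hle

/-- Crude lower bound (no restriction on turning angles): the lower density of a sequence
covering of the plane by unit disks, each containing the center of the next, is at least
`π/(π/3 + √3/2)`. -/
theorem lower_density_ge_crude (C : ℕ → Pt)
    (hcover : (⋃ n, closedBall (C n) 1) = Set.univ)
    (hdist : ∀ n, 1 ≤ n → 0 < dist (C n) (C (n - 1)) ∧ dist (C n) (C (n - 1)) ≤ 1) :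
    ENNReal.ofReal (π / (π / 3 + Real.sqrt 3 / 2)) ≤ lowerDensity C := by
  have hsquare : ∀ᶠ l in atTop, ENNReal.ofReal (4 * l ^ 2)
      ≤ ENNReal.ofReal π + Ncount C l * ENNReal.ofReal (π / 3 + √3 / 2) := by
    filter_upwards [eventually_ge_atTop 0] with l hl
    have h := measure_le_add_encard_mul (μ := volume) (S := openSquare l)
      (hcover ▸ Set.subset_univ _) fun n hn => volume_closedBall_diff_closedBall_le (hdist n hn).2
    rwa [volume_openSquare hl, EuclideanSpace.volume_closedBall_fin_two, ENNReal.ofReal_one,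
      one_pow, one_mul] at h
  exact ofReal_div_le_liminf_mul_div
    (tendsto_atTop_mono (fun l => le_mul_of_one_le_left (sq_nonneg l) (by norm_num))
      (tendsto_pow_atTop two_ne_zero)) (by positivity) pi_pos.le hsquare
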